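/- arXiv:1808.06512 — 3 statements merged into one kernel-verified Lean document; each statement's English description precedes it below -/
import Mathlib

section
/- Let G be a commutative group, and let K ≤ H be subgroups of G such that the index of K in H is a finite number n. Let A be an additive commutative group and let ψ : G/K → A be a finitely supported function that is invariant under left translation by H (i.e. ψ(h·xK) = ψ(xK) for all h ∈ H and x ∈ G). Then the sum of ψ over G/K is divisible by n: there exists a ∈ A with ∑_{x ∈ G/K} ψ(x) = n • a. In particular, if n • b = 0 for every b ∈ A, then ∑_{x ∈ G/K} ψ(x) = 0. -/
/-!
Since `G` is commutative, the stabiliser in `H` of a coset `gK` is `H ∩ K`, so every `H`-orbit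
in `G ⧸ K` has exactly `[H : K]` elements. An `H`-invariant `ψ` is constant on orbits, and its
finite support is a union of orbits, so its sum is `[H : K]` times a sum over orbit representatives.
-/

open Function Finset

theorem exists_finsum_comp_eq_nsmul_of_ncard_fiber {X Y A : Type*} [AddCommMonoid A]
    (f : X → Y) {φ : Y → A} (hφ : (support (φ ∘ f)).Finite) {n : ℕ}
    (hfib : ∀ y, (f ⁻¹' {y}).ncard = n) : ∃ a : A, ∑ᶠ x, φ (f x) = n • a := by
  classical
  set s := hφ.toFinset
  refine ⟨∑ y ∈ s.image f, φ y, ?_⟩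
  rw [finsum_eq_sum (fun x => φ (f x)) hφ, sum_comp, smul_sum]
  refine sum_congr rfl fun y hy => ?_
  obtain ⟨x, hx, rfl⟩ := mem_image.1 hy
  have hfiber : (↑{a ∈ s | f a = f x} : Set X) = f ⁻¹' {f x} := by
    ext a
    simp only [coe_filter, Set.mem_ofPred_eq, Set.mem_preimage, Set.mem_singleton_iff, s,
      Set.Finite.mem_toFinset, mem_support, comp_apply, and_iff_right_iff_imp]
    intro ha
    simpa [s, ha] using hx
  rw [← Set.ncard_coe_finset, hfiber, hfib]

theorem MulAction.exists_finsum_eq_nsmul_of_ncard_orbit {H X A : Type*} [Group H] [MulAction H X]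
    [AddCommMonoid A] {ψ : X → A} (hψ : (support ψ).Finite) (hinv : ∀ (h : H) x, ψ (h • x) = ψ x)
    {n : ℕ} (horbit : ∀ x : X, (orbit H x).ncard = n) : ∃ a : A, ∑ᶠ x, ψ x = n • a := by
  let φ : orbitRel.Quotient H X → A := Quotient.lift ψ fun a b hab => by
    obtain ⟨h, rfl⟩ := orbitRel_apply.1 hab
    exact hinv h b
  refine exists_finsum_comp_eq_nsmul_of_ncard_fiber (Quotient.mk'' : X → orbitRel.Quotient H X)
    (φ := φ) hψ fun y => ?_
  induction y using Quotient.inductionOn' with | h x =>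
  rw [← horbit x, ← orbitRel.Quotient.orbit_mk]
  exact congrArg Set.ncard (Set.ext fun a => orbitRel.Quotient.mem_orbit.symm)

theorem MulAction.ncard_orbit_subgroup_quotient {G : Type*} [CommGroup G] (K H : Subgroup G)
    (x : G ⧸ K) : (orbit H x).ncard = K.relIndex H := by
  induction x using QuotientGroup.induction_on with | H g =>
  have hstab : stabilizer H (g : G ⧸ K) = K.subgroupOf H := by
    ext h
    rw [mem_stabilizer_iff, Subgroup.mem_subgroupOf]
    change (((h : G) * g : G) : G ⧸ K) = g ↔ _
    rw [QuotientGroup.eq]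
    simp
  rw [← index_stabilizer, hstab]
  rfl

theorem stmt0_general {G : Type*} [CommGroup G] (K H : Subgroup G)
    (n : ℕ) (hn : K.relIndex H = n)
    {A : Type*} [AddCommGroup A] (ψ : G ⧸ K → A)
    (hsupp : (Function.support ψ).Finite)
    (hinv : ∀ h ∈ H, ∀ x : G ⧸ K, ψ (h • x) = ψ x) :
    (∃ a : A, ∑ᶠ x : G ⧸ K, ψ x = n • a) ∧
      ((∀ b : A, n • b = 0) → ∑ᶠ x : G ⧸ K, ψ x = 0) := by
  obtain ⟨a, ha⟩ := MulAction.exists_finsum_eq_nsmul_of_ncard_orbit (H := H) hsupp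
    (fun h x => hinv h h.2 x) fun x => hn ▸ MulAction.ncard_orbit_subgroup_quotient K H x
  exact ⟨⟨a, ha⟩, fun hexp => ha ▸ hexp a⟩

/-- Abstract form of Herzig's Lemma 2.7(iii): if `K ≤ H` are subgroups of a commutative
group `G` with `[H : K] = n` finite, and `ψ : G/K → A` is a finitely supported function
invariant under left translation by `H`, then the sum of `ψ` over `G/K` is divisible
by `n`; in particular it vanishes if `A` has exponent dividing `n`. -/
theorem stmt0 {G : Type*} [CommGroup G] (K H : Subgroup G) (hKH : K ≤ H)
    (n : ℕ) (hn : K.relIndex H = n) (hn0 : n ≠ 0)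
    {A : Type*} [AddCommGroup A] (ψ : G ⧸ K → A)
    (hsupp : (Function.support ψ).Finite)
    (hinv : ∀ h ∈ H, ∀ x : G ⧸ K, ψ (h • x) = ψ x) :
    (∃ a : A, ∑ᶠ x : G ⧸ K, ψ x = n • a) ∧
      ((∀ b : A, n • b = 0) → ∑ᶠ x : G ⧸ K, ψ x = 0) :=
  stmt0_general K H n hn ψ hsupp hinv
end

section
/- Let R be a commutative ring, G a group, and φ : G → Rˣ a group homomorphism; form the semidirect product P = R ⋊_φ G in which g ∈ G acts on the additive group (R, +) by multiplication by φ(g). If there exists g₀ ∈ G such that φ(g₀) − 1 is a unit of R, then the canonical copy of R inside P (the image of the inclusion r ↦ (r, 1)) is contained in the commutator subgroup of P. -/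
/-!
Conjugating `(r, 1)` by `(0, g)` multiplies `r` by `φ g`, so the commutator of `(0, g₀)` with
`(s, 1)` is `((φ g₀ - 1) s, 1)`. Since `φ g₀ - 1` is a unit, every `r` arises this way, from
`s = (φ g₀ - 1)⁻¹ r`.
-/

open scoped commutatorElement

namespace SemidirectProduct

variable {N G : Type*} [Group N] [Group G] {ψ : G →* MulAut N}

theorem commutatorElement_inr_inl (g : G) (n : N) :
    ⁅(inr g : N ⋊[ψ] G), (inl n : N ⋊[ψ] G)⁆ = inl (ψ g n * n⁻¹) := by
  rw [commutatorElement_def, map_mul, inl_aut, map_inv, map_inv]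

theorem range_inl_le_commutator_of_surjective (g : G)
    (hg : Function.Surjective fun n : N => ψ g n * n⁻¹) :
    (inl : N →* N ⋊[ψ] G).range ≤ commutator (N ⋊[ψ] G) := by
  rintro _ ⟨m, rfl⟩
  obtain ⟨n, rfl⟩ := hg m
  rw [← commutatorElement_inr_inl]
  exact Subgroup.commutator_mem_commutator (Subgroup.mem_top _) (Subgroup.mem_top _)

end SemidirectProduct

/-- Let `P = R ⋊ G` be the semidirect product of the additive group of a commutative ring
`R` by a group `G` acting through units via `φ : G →* Rˣ`. If some `φ g₀ - 1` is a unit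
of `R`, then the canonical copy of `R` in `P` lies in the commutator subgroup of `P`. -/
theorem stmt6 {R : Type*} [CommRing R] {G : Type*} [Group G] (φ : G →* Rˣ)
    (ψ : G →* MulAut (Multiplicative R))
    (hψ : ∀ (g : G) (r : R),
      ψ g (Multiplicative.ofAdd r) = Multiplicative.ofAdd ((φ g : R) * r))
    (g₀ : G) (hunit : IsUnit ((φ g₀ : R) - 1)) :
    (SemidirectProduct.inl : Multiplicative R →* Multiplicative R ⋊[ψ] G).range ≤
      commutator (Multiplicative R ⋊[ψ] G) := by
  have twist : ∀ r : R, ψ g₀ (Multiplicative.ofAdd r) * (Multiplicative.ofAdd r)⁻¹ =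
      Multiplicative.ofAdd (((φ g₀ : R) - 1) * r) := fun r => by
    rw [hψ, ← ofAdd_neg, ← ofAdd_add, sub_one_mul, sub_eq_add_neg]
  refine SemidirectProduct.range_inl_le_commutator_of_surjective g₀ fun m => ?_
  obtain ⟨u, hu⟩ := hunit
  refine ⟨Multiplicative.ofAdd (↑u⁻¹ * m.toAdd), ?_⟩
  dsimp only
  rw [twist, ← hu, ← mul_assoc, Units.mul_inv, one_mul, ofAdd_toAdd]
end

section
/- Let p be a prime. Let Γ be the set of matrices g = (a b; c d) in GL₂(ℤ_p) whose lower-left entry c lies in p²ℤ_p. Then: (1) Γ is a subgroup of GL₂(ℤ_p); (2) for every g ∈ Γ the diagonal entries a and d are units of ℤ_p; and (3) the map λ : Γ → (ℤ/p²ℤ)ˣ sending g to the reduction modulo p² of a·d⁻¹ is a group homomorphism. -/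
/-!
Reduction modulo `p²` maps `Γ` into the upper triangular subgroup of `GL₂(ℤ/p²ℤ)`, on which
`g ↦ g₀₀ / g₁₁` is a character: the diagonal of a product of upper triangular matrices is the
product of the diagonals. The diagonal entries of `g ∈ Γ` are units because `ℤ_p` is local and
`g₀₀ g₁₁ = det g + g₀₁ g₁₀` is a unit plus an element of the maximal ideal.
-/

open Matrix

namespace GL2

section CommRing

variable {R S : Type*} [CommRing R] [CommRing S]

def upperTriangular (R : Type*) [CommRing R] : Subgroup (GL (Fin 2) R) where
  carrier := {g | (g : Matrix (Fin 2) (Fin 2) R) 1 0 = 0}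
  one_mem' := by simp
  mul_mem' {g h} hg hh := by
    simp only [Set.mem_ofPred_eq, Units.val_mul, mul_apply, Fin.sum_univ_two] at hg hh ⊢
    rw [hg, hh, zero_mul, mul_zero, add_zero]
  inv_mem' {g} hg := by
    simp only [Set.mem_ofPred_eq, coe_units_inv, inv_def, adjugate_fin_two] at hg ⊢
    simp [hg]

lemma upperTriangular_lowerLeft (g : upperTriangular R) :
    ((g : GL (Fin 2) R) : Matrix (Fin 2) (Fin 2) R) 1 0 = 0 :=
  g.2

lemma upperTriangular_mul_diag (g h : upperTriangular R) (i : Fin 2) :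
    (((g * h : upperTriangular R) : GL (Fin 2) R) : Matrix (Fin 2) (Fin 2) R) i i =
      ((g : GL (Fin 2) R) : Matrix (Fin 2) (Fin 2) R) i i *
        ((h : GL (Fin 2) R) : Matrix (Fin 2) (Fin 2) R) i i := by
  fin_cases i <;>
    simp [mul_apply, Fin.sum_univ_two, upperTriangular_lowerLeft]

def diagEntry (i : Fin 2) : upperTriangular R →* R where
  toFun g := ((g : GL (Fin 2) R) : Matrix (Fin 2) (Fin 2) R) i i
  map_one' := by simp
  map_mul' g h := upperTriangular_mul_diag g h i

def diagRatio : upperTriangular R →* Rˣ :=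
  (diagEntry 0).toHomUnits / (diagEntry 1).toHomUnits

lemma val_diagRatio (g : upperTriangular R) {e : R}
    (he : ((g : GL (Fin 2) R) : Matrix (Fin 2) (Fin 2) R) 1 1 * e = 1) :
    (diagRatio g : R) = ((g : GL (Fin 2) R) : Matrix (Fin 2) (Fin 2) R) 0 0 * e := by
  have hinv : (((diagEntry 1).toHomUnits g)⁻¹ : Rˣ) = e :=
    Units.inv_eq_of_mul_eq_one_right he
  rw [diagRatio, MonoidHom.div_apply, div_eq_mul_inv, Units.val_mul, hinv]
  rfl

lemma mem_comap_map_upperTriangular_iff (φ : R →+* S) (g : GL (Fin 2) R) :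
    g ∈ (upperTriangular S).comap (GeneralLinearGroup.map φ) ↔
      (g : Matrix (Fin 2) (Fin 2) R) 1 0 ∈ RingHom.ker φ :=
  Iff.rfl

lemma val_diagRatio_subgroupComap (φ : R →+* S)
    (g : (upperTriangular S).comap (GeneralLinearGroup.map φ)) {e : R}
    (he : ((g : GL (Fin 2) R) : Matrix (Fin 2) (Fin 2) R) 1 1 * e = 1) :
    (diagRatio ((GeneralLinearGroup.map φ).subgroupComap _ g) : S) =
      φ (((g : GL (Fin 2) R) : Matrix (Fin 2) (Fin 2) R) 0 0 * e) := by
  rw [map_mul]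
  exact val_diagRatio _ (by rw [← map_one φ, ← he, map_mul]; rfl)

end CommRing

lemma isUnit_diag_of_lowerLeft_mem_maximalIdeal {R : Type*} [CommRing R] [IsLocalRing R]
    (g : GL (Fin 2) R)
    (hc : (g : Matrix (Fin 2) (Fin 2) R) 1 0 ∈ IsLocalRing.maximalIdeal R) :
    IsUnit ((g : Matrix (Fin 2) (Fin 2) R) 0 0) ∧
      IsUnit ((g : Matrix (Fin 2) (Fin 2) R) 1 1) := by
  set M := (g : Matrix (Fin 2) (Fin 2) R)
  have hdet : IsUnit (M 0 0 * M 1 1 + -(M 0 1 * M 1 0)) := by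
    rw [← sub_eq_add_neg, ← det_fin_two]
    exact (isUnit_iff_isUnit_det M).mp g.isUnit
  have hbc : ¬IsUnit (-(M 0 1 * M 1 0)) :=
    (IsLocalRing.mem_maximalIdeal _).mp (neg_mem (Ideal.mul_mem_left _ _ hc))
  have had := (IsLocalRing.isUnit_or_isUnit_of_isUnit_add hdet).resolve_right hbc
  exact ⟨isUnit_of_mul_isUnit_left had, isUnit_of_mul_isUnit_right had⟩

end GL2

open GL2 in
/-- For a prime `p`: the set of matrices in `GL₂(ℤ_p)` whose lower-left entry lies in
`p²ℤ_p` is a subgroup `Γ`; the diagonal entries of any element of `Γ` are units; and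
`g ↦ (a·d⁻¹ mod p²)` defines a group homomorphism `Γ →* (ℤ/p²ℤ)ˣ`. -/
theorem stmt8 (p : ℕ) [Fact p.Prime] :
    ∃ Γ : Subgroup (GL (Fin 2) ℤ_[p]),
      (∀ g : GL (Fin 2) ℤ_[p],
          g ∈ Γ ↔ (g : Matrix (Fin 2) (Fin 2) ℤ_[p]) 1 0 ∈
            Ideal.span {(p : ℤ_[p]) ^ 2}) ∧
      (∀ g ∈ Γ, IsUnit ((g : Matrix (Fin 2) (Fin 2) ℤ_[p]) 0 0) ∧
          IsUnit ((g : Matrix (Fin 2) (Fin 2) ℤ_[p]) 1 1)) ∧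
      ∃ lam : Γ →* (ZMod (p ^ 2))ˣ,
        ∀ (g : Γ) (e : ℤ_[p]),
          ((g : GL (Fin 2) ℤ_[p]) : Matrix (Fin 2) (Fin 2) ℤ_[p]) 1 1 * e = 1 →
          (lam g : ZMod (p ^ 2)) =
            PadicInt.toZModPow 2
              (((g : GL (Fin 2) ℤ_[p]) : Matrix (Fin 2) (Fin 2) ℤ_[p]) 0 0 * e) := by
  set reduce := GeneralLinearGroup.map (n := Fin 2) (PadicInt.toZModPow (p := p) 2)
  have hmem (g : GL (Fin 2) ℤ_[p]) : g ∈ (upperTriangular _).comap reduce ↔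
      (g : Matrix (Fin 2) (Fin 2) ℤ_[p]) 1 0 ∈ Ideal.span {(p : ℤ_[p]) ^ 2} := by
    rw [mem_comap_map_upperTriangular_iff, PadicInt.ker_toZModPow]
  refine ⟨(upperTriangular _).comap reduce, hmem, fun g hg => ?_,
    diagRatio.comp (reduce.subgroupComap _), fun g e he => val_diagRatio_subgroupComap _ g he⟩
  have hp2 : Ideal.span {(p : ℤ_[p]) ^ 2} ≤ IsLocalRing.maximalIdeal ℤ_[p] := by
    rw [PadicInt.maximalIdeal_eq_span_p]
    exact Ideal.span_singleton_le_span_singleton.mpr (dvd_pow_self _ two_ne_zero)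
  exact isUnit_diag_of_lowerLeft_mem_maximalIdeal g (hp2 ((hmem g).mp hg))
end
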